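/- arXiv:2004.12967 — 2 statements merged into one kernel-verified Lean document; each statement's English description precedes it below -/
import Mathlib

section
/- Let H₁ ⊆ H₀ be Hilbert spaces with compact inclusion, and for each t in a metric space I let T_t : H₁ → K be bounded linear operators depending continuously on t (in operator norm), and suppose there exists c > 0 independent of t with c·‖u‖_{H₁} ≤ ‖T_t u‖_K + ‖u‖_{H₀} for all u ∈ H₁ and all t. Fix t₀ ∈ I and let N₀ = ker T_{t₀}. Then there exist ε > 0 and C > 0 such that for all t with dist(t, t₀) < ε, ‖u‖_{H₁} ≤ C·‖T_t u‖_K for every u ∈ H₁ orthogonal (in H₀) to N₀. -/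
/-!
Because `ι` is compact, the estimate `c‖u‖ ≤ ‖S u‖ + ‖ι u‖` turns a bounded sequence with
`S vₙ → 0` into one with a convergent subsequence, whose limit lies in `ker S`. On a closed
subspace meeting `ker S` only in `0` this forces a coercive bound `‖u‖ ≤ C‖S u‖` by the usual
contradiction argument with unit vectors. Applied to `S = T t₀` on the pullback of the
`H₀`-orthogonal complement of `ι (ker T t₀)`, the bound survives the perturbation
`T t₀ ↝ T t` as soon as `‖T t - T t₀‖ ≤ 1 / (2C)`.
-/

open Filter Topology
open scoped InnerProductSpace

namespace ContinuousLinearMap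

variable {𝕜 E F G : Type*} [RCLike 𝕜]
  [NormedAddCommGroup E] [NormedSpace 𝕜 E] [NormedAddCommGroup F] [NormedSpace 𝕜 F]
  [NormedAddCommGroup G] [NormedSpace 𝕜 G]

section Estimate

variable {S : E →L[𝕜] F} {ι : E →L[𝕜] G} {c : ℝ}

-- The estimate says that `u ↦ (S u, ι u)` is antilipschitz.
lemma cauchySeq_of_le_norm_add_norm (hc : 0 < c) (hest : ∀ u, c * ‖u‖ ≤ ‖S u‖ + ‖ι u‖)
    {v : ℕ → E} (hS : CauchySeq (S ∘ v)) (hι : CauchySeq (ι ∘ v)) : CauchySeq v := by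
  have hL : AntilipschitzWith (2 / c).toNNReal (S.prod ι) :=
    (S.prod ι).antilipschitz_of_bound fun u => by
      rw [Real.coe_toNNReal _ (by positivity), prod_apply, Prod.norm_def, div_mul_eq_mul_div,
        le_div_iff₀ hc]
      nlinarith [hest u, le_max_left ‖S u‖ ‖ι u‖, le_max_right ‖S u‖ ‖ι u‖]
  exact (hL.isUniformInducing (S.prod ι).uniformContinuous).cauchy_map_iff.1 (hS.prodMk hι)

lemma exists_subseq_tendsto_of_le_norm_add_norm [CompleteSpace E] (hc : 0 < c)
    (hest : ∀ u, c * ‖u‖ ≤ ‖S u‖ + ‖ι u‖) (hcomp : IsCompactOperator ι) {R : ℝ} {v : ℕ → E}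
    (hv : ∀ n, ‖v n‖ ≤ R) (hS : Tendsto (S ∘ v) atTop (𝓝 0)) :
    ∃ x, ∃ φ : ℕ → ℕ, StrictMono φ ∧ Tendsto (v ∘ φ) atTop (𝓝 x) := by
  obtain ⟨B, hB, hιB⟩ := hcomp.image_closedBall_subset_compact R
  obtain ⟨_, -, φ, hφ, hιv⟩ :=
    hB.tendsto_subseq fun n => hιB ⟨v n, mem_closedBall_zero_iff.2 (hv n), rfl⟩
  have hSv : CauchySeq (S ∘ v ∘ φ) := (hS.comp hφ.tendsto_atTop).cauchySeq
  exact ⟨_, φ, hφ, (cauchySeq_tendsto_of_complete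
    (cauchySeq_of_le_norm_add_norm hc hest hSv hιv.cauchySeq)).choose_spec⟩

lemma exists_pos_norm_le_mul_norm [CompleteSpace E] (hc : 0 < c)
    (hest : ∀ u, c * ‖u‖ ≤ ‖S u‖ + ‖ι u‖) (hcomp : IsCompactOperator ι) {A : Submodule 𝕜 E}
    (hA : IsClosed (A : Set E)) (hAS : ∀ u ∈ A, S u = 0 → u = 0) :
    ∃ C > 0, ∀ u ∈ A, ‖u‖ ≤ C * ‖S u‖ := by
  obtain ⟨δ, hδ, hunit⟩ : ∃ δ > 0, ∀ u ∈ A, ‖u‖ = 1 → δ ≤ ‖S u‖ := by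
    by_contra! h
    choose v hvA hv1 hSv using fun n : ℕ => h (1 / (n + 1)) Nat.one_div_pos_of_nat
    have hS : Tendsto (S ∘ v) atTop (𝓝 0) :=
      squeeze_zero_norm (fun n => (hSv n).le) tendsto_one_div_add_atTop_nhds_zero_nat
    obtain ⟨x, φ, hφ, hx⟩ :=
      exists_subseq_tendsto_of_le_norm_add_norm hc hest hcomp (fun n => (hv1 n).le) hS
    have hxA : x ∈ A := hA.mem_of_tendsto hx (.of_forall fun n => hvA (φ n))
    have hx1 : ‖x‖ = 1 := tendsto_nhds_unique hx.norm (by simp [hv1])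
    have hSx : S x = 0 :=
      tendsto_nhds_unique ((S.continuous.tendsto x).comp hx) (hS.comp hφ.tendsto_atTop)
    simp [hAS x hxA hSx] at hx1
  refine ⟨δ⁻¹, inv_pos.2 hδ, fun u hu => ?_⟩
  rcases eq_or_ne u 0 with rfl | hu0
  · simp
  have h := hunit _ (A.smul_mem (‖u‖⁻¹ : 𝕜) hu) (norm_smul_inv_norm hu0)
  rw [map_smul, norm_smul, norm_inv, RCLike.norm_ofReal, abs_norm, inv_mul_eq_div,
    le_div_iff₀ (norm_pos_iff.2 hu0)] at h
  rwa [inv_mul_eq_div, le_div_iff₀ hδ, mul_comm]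

end Estimate

lemma norm_le_two_mul_norm_of_norm_sub_le {S S' : E →L[𝕜] F} {C : ℝ} {u : E}
    (hu : ‖u‖ ≤ C * ‖S u‖) (hC : 0 ≤ C) (hSS' : C * ‖S - S'‖ ≤ 1 / 2) :
    ‖u‖ ≤ 2 * C * ‖S' u‖ := by
  have h : ‖S u‖ ≤ ‖S' u‖ + ‖S - S'‖ * ‖u‖ := by
    calc ‖S u‖ = ‖S' u + (S - S') u‖ := by simp
      _ ≤ ‖S' u‖ + ‖S - S'‖ * ‖u‖ := (norm_add_le _ _).trans (by gcongr; exact le_opNorm _ _)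
  nlinarith [mul_le_mul_of_nonneg_left h hC, norm_nonneg u]

end ContinuousLinearMap

namespace Submodule

variable {𝕜 E H : Type*} [RCLike 𝕜] [AddCommGroup E] [Module 𝕜 E]
  [NormedAddCommGroup H] [InnerProductSpace 𝕜 H] {ι : E →ₗ[𝕜] H} {N : Submodule 𝕜 E}

lemma mem_comap_orthogonal_map_iff {u : E} :
    u ∈ (N.map ι)ᗮ.comap ι ↔ ∀ w ∈ N, ⟪ι u, ι w⟫_𝕜 = 0 := by
  simp [mem_orthogonal']

lemma eq_zero_of_mem_comap_orthogonal_map (hinj : Function.Injective ι) {u : E}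
    (hu : u ∈ (N.map ι)ᗮ.comap ι) (huN : u ∈ N) : u = 0 := by
  have : ι u ∈ N.map ι ⊓ (N.map ι)ᗮ := ⟨mem_map_of_mem huN, hu⟩
  rw [inf_orthogonal_eq_bot, mem_bot] at this
  exact hinj (this.trans ι.map_zero.symm)

end Submodule

theorem stmt8_general {H₀ H₁ K : Type*}
    [NormedAddCommGroup H₀] [InnerProductSpace ℂ H₀]
    [NormedAddCommGroup H₁] [InnerProductSpace ℂ H₁] [CompleteSpace H₁]
    [NormedAddCommGroup K] [InnerProductSpace ℂ K]
    {I : Type*} [MetricSpace I]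
    (ι : H₁ →L[ℂ] H₀) (hcomp : IsCompactOperator ι) (hinj : Function.Injective ι)
    (T : I → (H₁ →L[ℂ] K)) (hTcont : Continuous T)
    (c : ℝ) (hc : 0 < c)
    (hest : ∀ (t : I) (u : H₁), c * ‖u‖ ≤ ‖T t u‖ + ‖ι u‖)
    (t₀ : I) :
    ∃ ε > (0 : ℝ), ∃ C > (0 : ℝ), ∀ t : I, dist t t₀ < ε →
      ∀ u : H₁, (∀ w ∈ LinearMap.ker (T t₀ : H₁ →ₗ[ℂ] K), ⟪ι u, ι w⟫_ℂ = 0) →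
        ‖u‖ ≤ C * ‖T t u‖ := by
  set N₀ := LinearMap.ker (T t₀ : H₁ →ₗ[ℂ] K)
  obtain ⟨C, hC, hcoercive⟩ := (T t₀).exists_pos_norm_le_mul_norm hc (hest t₀) hcomp
    (A := (N₀.map (ι : H₁ →ₗ[ℂ] H₀))ᗮ.comap (ι : H₁ →ₗ[ℂ] H₀))
    ((N₀.map (ι : H₁ →ₗ[ℂ] H₀)).isClosed_orthogonal.preimage ι.continuous)
    fun _ hu hTu => Submodule.eq_zero_of_mem_comap_orthogonal_map hinj hu (LinearMap.mem_ker.2 hTu)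
  obtain ⟨ε, hε, hnear⟩ := Metric.continuous_iff.1 hTcont t₀ (1 / (2 * C)) (by positivity)
  refine ⟨ε, hε, 2 * C, by positivity, fun t ht u hu => ?_⟩
  refine (T t₀).norm_le_two_mul_norm_of_norm_sub_le
    (hcoercive u (Submodule.mem_comap_orthogonal_map_iff.2 hu)) hC.le ?_
  rw [← dist_eq_norm, dist_comm]
  calc C * dist (T t) (T t₀) ≤ C * (1 / (2 * C)) := by gcongr; exact (hnear t ht).le
    _ = 1 / 2 := by field_simp

/-- Uniform coercive estimate for a continuous family of operators `T t` satisfying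
a uniform subelliptic estimate with respect to a compact injective inclusion
`ι : H₁ → H₀`: for `t` close to `t₀`, `‖u‖₁ ≤ C‖T t u‖` holds uniformly for all `u`
orthogonal in `H₀` to `N₀ = ker (T t₀)`. -/
theorem stmt8 {H₀ H₁ K : Type*}
    [NormedAddCommGroup H₀] [InnerProductSpace ℂ H₀] [CompleteSpace H₀]
    [NormedAddCommGroup H₁] [InnerProductSpace ℂ H₁] [CompleteSpace H₁]
    [NormedAddCommGroup K] [InnerProductSpace ℂ K] [CompleteSpace K]
    {I : Type*} [MetricSpace I]
    (ι : H₁ →L[ℂ] H₀) (hcomp : IsCompactOperator ι) (hinj : Function.Injective ι)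
    (T : I → (H₁ →L[ℂ] K)) (hTcont : Continuous T)
    (c : ℝ) (hc : 0 < c)
    (hest : ∀ (t : I) (u : H₁), c * ‖u‖ ≤ ‖T t u‖ + ‖ι u‖)
    (t₀ : I) :
    ∃ ε > (0 : ℝ), ∃ C > (0 : ℝ), ∀ t : I, dist t t₀ < ε →
      ∀ u : H₁, (∀ w ∈ LinearMap.ker (T t₀ : H₁ →ₗ[ℂ] K), ⟪ι u, ι w⟫_ℂ = 0) →
        ‖u‖ ≤ C * ‖T t u‖ :=
  stmt8_general ι hcomp hinj T hTcont c hc hest t₀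
end

section
/- Under the hypotheses of the previous statement, there exist ε > 0 such that for all t with dist(t, t₀) < ε, the kernel of T_t intersects the H₀-orthogonal complement of N₀ = ker T_{t₀} trivially; consequently dim ker T_t ≤ dim ker T_{t₀}. -/
open scoped InnerProductSpace
open Filter Topology

/-!
Since `(T u, ι u)` controls `‖u‖` and `ι` is compact, every bounded sequence along which `T`
tends to zero has a convergent subsequence. Hence `N₀ = ker (T t₀)` is finite dimensional and
`T t₀` is bounded below, by some `c' > 0`, on the closed subspace `V = ι⁻¹ (ι N₀)ᗮ`, which meets
`N₀` trivially. When `‖T t - T t₀‖ < c'`, the kernel of `T t` still meets `V` trivially, so the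
orthogonal projection onto `ι N₀` embeds `ker (T t)` into a space of dimension at most `dim N₀`.
-/

section Estimate

variable {𝕜 E F G : Type*} [RCLike 𝕜]
  [NormedAddCommGroup E] [NormedSpace 𝕜 E]
  [NormedAddCommGroup F] [NormedSpace 𝕜 F]
  [NormedAddCommGroup G] [NormedSpace 𝕜 G]
  {ι : E →L[𝕜] F} {T : E →L[𝕜] G} {c : ℝ}

theorem IsCompactOperator.exists_tendsto_subseq {v : ℕ → E} {R : ℝ} (hι : IsCompactOperator ι)
    (hv : ∀ n, ‖v n‖ ≤ R) :
    ∃ y, ∃ φ : ℕ → ℕ, StrictMono φ ∧ Tendsto (fun n => ι (v (φ n))) atTop (𝓝 y) := by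
  obtain ⟨K, hK, hιK⟩ := hι.image_closedBall_subset_compact (f := (ι : E →ₗ[𝕜] F)) R
  obtain ⟨y, -, φ, hφ, hy⟩ :=
    hK.tendsto_subseq fun n => hιK ⟨v n, by simpa using hv n, rfl⟩
  exact ⟨y, φ, hφ, hy⟩

theorem antilipschitzWith_prod_of_estimate (hc : 0 < c)
    (hest : ∀ u, c * ‖u‖ ≤ ‖T u‖ + ‖ι u‖) :
    AntilipschitzWith ⟨2 / c, by positivity⟩ (T.prod ι) :=
  (T.prod ι).antilipschitz_of_bound fun u => by
    have hmax : ‖T u‖ + ‖ι u‖ ≤ 2 * ‖(T.prod ι) u‖ := by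
      simp only [ContinuousLinearMap.prod_apply, Prod.norm_def]
      linarith [le_max_left ‖T u‖ ‖ι u‖, le_max_right ‖T u‖ ‖ι u‖]
    change ‖u‖ ≤ 2 / c * _
    rw [div_mul_eq_mul_div, le_div_iff₀ hc, mul_comm]
    exact (hest u).trans hmax

variable [CompleteSpace E]

theorem exists_tendsto_subseq_of_estimate (hι : IsCompactOperator ι) (hc : 0 < c)
    (hest : ∀ u, c * ‖u‖ ≤ ‖T u‖ + ‖ι u‖) {v : ℕ → E} {R : ℝ} (hv : ∀ n, ‖v n‖ ≤ R)
    (hTv : Tendsto (fun n => T (v n)) atTop (𝓝 0)) :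
    ∃ u, ∃ φ : ℕ → ℕ, StrictMono φ ∧ Tendsto (fun n => v (φ n)) atTop (𝓝 u) := by
  obtain ⟨y, φ, hφ, hy⟩ := hι.exists_tendsto_subseq hv
  have hS := (antilipschitzWith_prod_of_estimate hc hest).isUniformInducing
    (T.prod ι).uniformContinuous
  have hSv : CauchySeq (fun n => (T.prod ι) (v (φ n))) :=
    ((hTv.comp hφ.tendsto_atTop).prodMk_nhds hy).cauchySeq
  have hv : CauchySeq (fun n => v (φ n)) := by
    refine hS.cauchy_map_iff.1 ?_
    rw [Filter.map_map]
    exact hSv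
  obtain ⟨u, hu⟩ := cauchySeq_tendsto_of_complete hv
  exact ⟨u, φ, hφ, hu⟩

theorem finiteDimensional_ker_of_estimate (hι : IsCompactOperator ι) (hc : 0 < c)
    (hest : ∀ u, c * ‖u‖ ≤ ‖T u‖ + ‖ι u‖) :
    FiniteDimensional 𝕜 (LinearMap.ker (T : E →ₗ[𝕜] G)) := by
  refine .of_isCompact_closedBall₀ 𝕜 one_pos (IsSeqCompact.isCompact fun x hx => ?_)
  have hx : ∀ n, ‖(x n : E)‖ ≤ 1 := by simpa using hx
  obtain ⟨u, φ, hφ, hu⟩ :=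
    exists_tendsto_subseq_of_estimate hι hc hest hx (by simp)
  have hu_ker : u ∈ LinearMap.ker (T : E →ₗ[𝕜] G) :=
    (T.isClosed_ker).mem_of_tendsto hu (Eventually.of_forall fun n => (x (φ n)).2)
  refine ⟨⟨u, hu_ker⟩, ?_, φ, hφ, tendsto_subtype_rng.2 hu⟩
  simpa using le_of_tendsto (continuous_norm.tendsto u |>.comp hu)
    (Eventually.of_forall fun n => hx (φ n))

theorem exists_pos_mul_norm_le_of_disjoint_ker (hι : IsCompactOperator ι) (hc : 0 < c)
    (hest : ∀ u, c * ‖u‖ ≤ ‖T u‖ + ‖ι u‖) {V : Submodule 𝕜 E} (hV : IsClosed (V : Set E))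
    (hdisj : Disjoint V (LinearMap.ker (T : E →ₗ[𝕜] G))) :
    ∃ c' > (0 : ℝ), ∀ u ∈ V, c' * ‖u‖ ≤ ‖T u‖ := by
  by_contra! h
  have hunit : ∀ n : ℕ, ∃ v ∈ V, ‖v‖ = 1 ∧ ‖T v‖ < 1 / (n + 1) := by
    intro n
    obtain ⟨u, huV, hu⟩ := h (1 / (n + 1)) (by positivity)
    have hu0 : u ≠ 0 := by rintro rfl; simp at hu
    refine ⟨(‖u‖⁻¹ : 𝕜) • u, V.smul_mem _ huV, norm_smul_inv_norm hu0, ?_⟩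
    rw [map_smul, norm_smul, norm_inv, RCLike.norm_ofReal, abs_norm,
      inv_mul_lt_iff₀ (norm_pos_iff.2 hu0)]
    linarith
  choose v hvV hv1 hTv using hunit
  have hTv0 : Tendsto (fun n => T (v n)) atTop (𝓝 0) :=
    squeeze_zero_norm (fun n => (hTv n).le) tendsto_one_div_add_atTop_nhds_zero_nat
  obtain ⟨u, φ, hφ, hu⟩ :=
    exists_tendsto_subseq_of_estimate hι hc hest (fun n => (hv1 n).le) hTv0
  have huV : u ∈ V := hV.mem_of_tendsto hu (Eventually.of_forall fun n => hvV (φ n))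
  have hu_ker : T u = 0 :=
    tendsto_nhds_unique ((T.continuous.tendsto u).comp hu) (hTv0.comp hφ.tendsto_atTop)
  have hu1 : ‖u‖ = 1 :=
    tendsto_nhds_unique ((continuous_norm.tendsto u).comp hu) (by simp [Function.comp_def, hv1])
  simp [Submodule.disjoint_def.1 hdisj u huV hu_ker] at hu1

end Estimate

theorem ContinuousLinearMap.disjoint_ker_of_norm_sub_lt {𝕜 E G : Type*} [RCLike 𝕜]
    [NormedAddCommGroup E] [NormedSpace 𝕜 E] [NormedAddCommGroup G] [NormedSpace 𝕜 G]
    {S T : E →L[𝕜] G} {V : Submodule 𝕜 E} {c : ℝ} (hT : ∀ u ∈ V, c * ‖u‖ ≤ ‖T u‖)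
    (hST : ‖S - T‖ < c) : Disjoint (LinearMap.ker (S : E →ₗ[𝕜] G)) V := by
  refine Submodule.disjoint_def.2 fun u hSu huV => norm_eq_zero.1 ?_
  have hSu : S u = 0 := hSu
  have : c * ‖u‖ ≤ ‖S - T‖ * ‖u‖ :=
    calc c * ‖u‖ ≤ ‖T u‖ := hT u huV
      _ = ‖(S - T) u‖ := by simp [hSu]
      _ ≤ ‖S - T‖ * ‖u‖ := (S - T).le_opNorm u
  nlinarith [norm_nonneg u]

section Orthogonal

variable {𝕜 E F : Type*} [RCLike 𝕜] [AddCommGroup E] [Module 𝕜 E]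
  [NormedAddCommGroup F] [InnerProductSpace 𝕜 F] {ι : E →ₗ[𝕜] F} {N : Submodule 𝕜 E}

theorem Submodule.mem_comap_orthogonal_map {u : E} :
    u ∈ (N.map ι)ᗮ.comap ι ↔ ∀ w ∈ N, ⟪ι u, ι w⟫_𝕜 = 0 := by
  simp [Submodule.mem_orthogonal']

theorem Submodule.disjoint_comap_orthogonal_map (hι : Function.Injective ι) :
    Disjoint ((N.map ι)ᗮ.comap ι) N :=
  Submodule.disjoint_def.2 fun u hu huN =>
    (map_eq_zero_iff ι hι).1 (inner_self_eq_zero.1 (mem_comap_orthogonal_map.1 hu u huN))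

theorem Submodule.finrank_le_of_disjoint_comap_orthogonal_map [FiniteDimensional 𝕜 N]
    {M : Submodule 𝕜 E} (hM : Disjoint M ((N.map ι)ᗮ.comap ι)) :
    Module.finrank 𝕜 M ≤ Module.finrank 𝕜 N := by
  let f : M →ₗ[𝕜] N.map ι := (N.map ι).orthogonalProjectionOnto.toLinearMap ∘ₗ ι ∘ₗ M.subtype
  have hf : Function.Injective f := by
    refine injective_iff_map_eq_zero f |>.2 fun u hu => Subtype.ext ?_
    refine Submodule.disjoint_def.1 hM u u.2 ?_
    exact Submodule.orthogonalProjectionOnto_eq_zero_iff.1 hu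
  exact (LinearMap.finrank_le_finrank_of_injective hf).trans (Submodule.finrank_map_le ι N)

end Orthogonal

theorem stmt9_general {H₀ H₁ K : Type*}
    [NormedAddCommGroup H₀] [InnerProductSpace ℂ H₀]
    [NormedAddCommGroup H₁] [InnerProductSpace ℂ H₁] [CompleteSpace H₁]
    [NormedAddCommGroup K] [InnerProductSpace ℂ K]
    {I : Type*} [MetricSpace I]
    (ι : H₁ →L[ℂ] H₀) (hcomp : IsCompactOperator ι) (hinj : Function.Injective ι)
    (T : I → (H₁ →L[ℂ] K)) (hTcont : Continuous T)
    (c : ℝ) (hc : 0 < c)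
    (hest : ∀ (t : I) (u : H₁), c * ‖u‖ ≤ ‖T t u‖ + ‖ι u‖)
    (t₀ : I) :
    ∃ ε > (0 : ℝ), ∀ t : I, dist t t₀ < ε →
      (∀ u ∈ LinearMap.ker (T t : H₁ →ₗ[ℂ] K),
        (∀ w ∈ LinearMap.ker (T t₀ : H₁ →ₗ[ℂ] K), ⟪ι u, ι w⟫_ℂ = 0) → u = 0) ∧
      Module.finrank ℂ (LinearMap.ker (T t : H₁ →ₗ[ℂ] K)) ≤
        Module.finrank ℂ (LinearMap.ker (T t₀ : H₁ →ₗ[ℂ] K)) := by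
  set N₀ := LinearMap.ker (T t₀ : H₁ →ₗ[ℂ] K)
  have : FiniteDimensional ℂ N₀ := finiteDimensional_ker_of_estimate hcomp hc (hest t₀)
  set V := (N₀.map (ι : H₁ →ₗ[ℂ] H₀))ᗮ.comap (ι : H₁ →ₗ[ℂ] H₀)
  have hV : IsClosed (V : Set H₁) := (Submodule.isClosed_orthogonal _).preimage ι.continuous
  obtain ⟨c', hc', hT₀⟩ := exists_pos_mul_norm_le_of_disjoint_ker hcomp hc (hest t₀) hV
    (Submodule.disjoint_comap_orthogonal_map (ι := (ι : H₁ →ₗ[ℂ] H₀)) hinj)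
  obtain ⟨ε, hε, hTε⟩ := Metric.continuousAt_iff.1 hTcont.continuousAt c' hc'
  refine ⟨ε, hε, fun t ht => ?_⟩
  have hdisj : Disjoint (LinearMap.ker (T t : H₁ →ₗ[ℂ] K)) V :=
    (T t).disjoint_ker_of_norm_sub_lt hT₀ (by simpa [dist_eq_norm] using hTε ht)
  exact ⟨fun u hu horth => Submodule.disjoint_def.1 hdisj u hu
      (Submodule.mem_comap_orthogonal_map.2 horth),
    Submodule.finrank_le_of_disjoint_comap_orthogonal_map hdisj⟩

/-- Upper semicontinuity of the kernel dimension under deformation: under the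
hypotheses of the uniform subelliptic estimate, for `t` close to `t₀` the kernel of
`T t` meets the `H₀`-orthogonal complement of `N₀ = ker (T t₀)` trivially, so
`dim ker (T t) ≤ dim ker (T t₀)`. -/
theorem stmt9 {H₀ H₁ K : Type*}
    [NormedAddCommGroup H₀] [InnerProductSpace ℂ H₀] [CompleteSpace H₀]
    [NormedAddCommGroup H₁] [InnerProductSpace ℂ H₁] [CompleteSpace H₁]
    [NormedAddCommGroup K] [InnerProductSpace ℂ K] [CompleteSpace K]
    {I : Type*} [MetricSpace I]
    (ι : H₁ →L[ℂ] H₀) (hcomp : IsCompactOperator ι) (hinj : Function.Injective ι)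
    (T : I → (H₁ →L[ℂ] K)) (hTcont : Continuous T)
    (c : ℝ) (hc : 0 < c)
    (hest : ∀ (t : I) (u : H₁), c * ‖u‖ ≤ ‖T t u‖ + ‖ι u‖)
    (t₀ : I) :
    ∃ ε > (0 : ℝ), ∀ t : I, dist t t₀ < ε →
      (∀ u ∈ LinearMap.ker (T t : H₁ →ₗ[ℂ] K),
        (∀ w ∈ LinearMap.ker (T t₀ : H₁ →ₗ[ℂ] K), ⟪ι u, ι w⟫_ℂ = 0) → u = 0) ∧
      Module.finrank ℂ (LinearMap.ker (T t : H₁ →ₗ[ℂ] K)) ≤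
        Module.finrank ℂ (LinearMap.ker (T t₀ : H₁ →ₗ[ℂ] K)) :=
  stmt9_general ι hcomp hinj T hTcont c hc hest t₀
end
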